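/- arXiv:1006.2062 — 3 statements merged into one kernel-verified Lean document; each statement's English description precedes it below -/
import Mathlib

section
/- Let 𝔫 be a finite-dimensional complex nilpotent Lie algebra and ρ: 𝔫 → gl(V) a finite-dimensional representation. Then there exist representations δ and ν of 𝔫 on V such that ρ = δ + ν (as linear maps), δ(x) is diagonalizable for every x, ν(x) is nilpotent for every x, δ([𝔫,𝔫]) = 0, and δ(x) commutes with ν(y) for all x, y ∈ 𝔫. -/
attribute [local instance 100] LieRing.ofAssociativeRing

/-!
Decompose `V` into the generalized weight spaces `V^χ` of the nilpotent Lie algebra; over `ℂ`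
they are independent and span `V`. Let `δ x` act on `V^χ` as the scalar `χ x`. The weights are
linear and vanish on `[𝔫, 𝔫]`, and the values of `δ` are simultaneously diagonal, so `δ` is a Lie
algebra morphism killing `[𝔫, 𝔫]` with semisimple values. Each `V^χ` is `𝔫`-stable, so `δ x`
commutes with every `ρ y`, which makes `ν = ρ - δ` a morphism as well; on `V^χ`, `ν x` is
`ρ x - χ x`, nilpotent by the definition of a generalized weight space.
-/

lemma LinearMap.ext_of_iSup_eq_top {ι R M N : Type*} [Semiring R] [AddCommMonoid M] [Module R M]
    [AddCommMonoid N] [Module R N] {S : ι → Submodule R M} (hS : ⨆ i, S i = ⊤)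
    {f g : M →ₗ[R] N} (h : ∀ i, ∀ v ∈ S i, f v = g v) : f = g :=
  LinearMap.ext_on (s := ⋃ i, (S i : Set M)) (by rw [← Submodule.iSup_eq_span, hS])
    fun _ hv ↦ by obtain ⟨i, hv⟩ := Set.mem_iUnion.mp hv; exact h i _ hv

lemma Module.End.isNilpotent_of_iSup_eq_top {ι R M : Type*} [Finite ι] [CommRing R]
    [AddCommGroup M] [Module R M] {S : ι → Submodule R M} (hS : ⨆ i, S i = ⊤)
    {f : Module.End R M} (hf : ∀ i, ∀ v ∈ S i, f v ∈ S i)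
    (hnil : ∀ i, IsNilpotent (f.restrict (hf i))) : IsNilpotent f := by
  have := Fintype.ofFinite ι
  choose k hk using hnil
  refine ⟨Finset.univ.sup k, LinearMap.ext_of_iSup_eq_top hS fun i v hv ↦ ?_⟩
  obtain ⟨j, hj⟩ := Nat.exists_eq_add_of_le (Finset.le_sup (f := k) (Finset.mem_univ i))
  have hkv : (f ^ k i) v = 0 := by
    have := congr_arg Subtype.val (LinearMap.congr_fun (hk i) ⟨v, hv⟩)
    rwa [Module.End.pow_restrict] at this
  rw [hj, add_comm, pow_add, Module.End.mul_apply, hkv, map_zero, LinearMap.zero_apply]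

def LieHom.subOfCommute {R L A : Type*} [CommRing R] [LieRing L] [LieAlgebra R L] [Ring A]
    [Algebra R A] (ρ δ : L →ₗ⁅R⁆ A) (hlie : ∀ x y : L, δ ⁅x, y⁆ = 0)
    (hcomm : ∀ x y, Commute (δ x) (ρ y)) : L →ₗ⁅R⁆ A where
  __ := ρ.toLinearMap - δ.toLinearMap
  map_lie' {x y} := by
    have hδρ : ⁅δ x, ρ y⁆ = 0 := commute_iff_lie_eq.mp (hcomm x y)
    have hρδ : ⁅ρ x, δ y⁆ = 0 := by rw [← lie_skew, commute_iff_lie_eq.mp (hcomm y x), neg_zero]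
    simp [sub_lie, lie_sub, hδρ, hρδ, ← LieHom.map_lie, hlie]

namespace DirectSum.IsInternal

variable {ι M : Type*} [DecidableEq ι] [AddCommGroup M]

section CommRing

variable {R : Type*} [CommRing R] [Module R M] {S : ι → Submodule R M} (h : IsInternal S)

noncomputable def diagonal : (ι → R) →ₐ[R] Module.End R M :=
  ((LinearEquiv.ofBijective (coeLinearMap S) h).conjAlgEquiv R).toAlgHom.comp
  { toFun c := lmap fun i ↦ c i • LinearMap.id
    map_one' := by ext; simp
    map_mul' c d := by ext; simp [mul_smul, smul_comm (c _)]
    map_zero' := by ext; simp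
    map_add' c d := by ext; simp [add_smul]
    commutes' r := by ext; simp }

lemma diagonal_apply_of_mem (c : ι → R) {i : ι} {v : M} (hv : v ∈ S i) :
    h.diagonal c v = c i • v := by
  have hv' : LinearEquiv.ofBijective (coeLinearMap S) h (lof R ι (fun i ↦ S i) i ⟨v, hv⟩) = v :=
    coeLinearMap_lof S i _
  rw [← hv']
  simp [diagonal, LinearEquiv.conjAlgEquiv_apply, ← map_smul]

lemma commute_diagonal (c : ι → R) {f : Module.End R M} (hf : ∀ i, ∀ v ∈ S i, f v ∈ S i) :
    Commute (h.diagonal c) f :=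
  LinearMap.ext_of_iSup_eq_top h.submodule_iSup_eq_top fun i v hv ↦ by
    simp only [Module.End.mul_apply, h.diagonal_apply_of_mem c hv,
      h.diagonal_apply_of_mem c (hf i v hv), map_smul]

lemma isNilpotent_sub_diagonal [Finite ι] (c : ι → R) {f : Module.End R M}
    (hf : ∀ i, ∀ v ∈ S i, f v ∈ S i)
    (hnil : ∀ i, IsNilpotent (f.restrict (hf i) - algebraMap R _ (c i))) :
    IsNilpotent (f - h.diagonal c) := by
  have hfc : ∀ i, ∀ v ∈ S i, (f - h.diagonal c) v ∈ S i := fun i v hv ↦ by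
    rw [LinearMap.sub_apply, h.diagonal_apply_of_mem c hv]
    exact sub_mem (hf i v hv) (Submodule.smul_mem _ _ hv)
  refine Module.End.isNilpotent_of_iSup_eq_top h.submodule_iSup_eq_top hfc fun i ↦ ?_
  convert hnil i using 1
  ext ⟨v, hv⟩
  simp [h.diagonal_apply_of_mem c hv]

end CommRing

open Polynomial in
lemma isSemisimple_diagonal {K : Type*} [Finite ι] [Field K] [Module K M]
    {S : ι → Submodule K M} (h : IsInternal S) (c : ι → K) : (h.diagonal c).IsSemisimple := by
  classical
  have := Fintype.ofFinite ι
  let p := ∏ a ∈ Finset.univ.image c, (X - C a)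
  have hp : aeval c p = 0 := funext fun i ↦ by
    simp [p, Finset.prod_eq_zero_iff, sub_eq_zero]
  refine Module.End.isSemisimple_of_squarefree_aeval_eq_zero (p := p)
    (separable_prod_X_sub_C_iff'.mpr fun _ _ _ _ ↦ id).squarefree ?_
  rw [aeval_algHom_apply, hp, map_zero]

end DirectSum.IsInternal

namespace LieModule

open scoped Classical

variable (K L M : Type*) [Field K] [LieRing L] [LieAlgebra K L] [LieRing.IsNilpotent L]
  [AddCommGroup M] [Module K M] [LieRingModule L M] [LieModule K L M] [FiniteDimensional K M]
  [IsTriangularizable K L M]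

lemma isInternal_genWeightSpace :
    DirectSum.IsInternal fun χ : Weight K L M ↦ (genWeightSpace M χ : Submodule K M) :=
  DirectSum.isInternal_submodule_of_iSupIndep_of_iSup_eq_top
    (LieSubmodule.iSupIndep_toSubmodule.mpr (iSupIndep_genWeightSpace' K L M))
    (LieSubmodule.iSup_toSubmodule_eq_top.mpr (iSup_genWeightSpace_eq_top' K L M))

variable [LinearWeights K L M]

noncomputable def semisimplePart : L →ₗ⁅K⁆ Module.End K M where
  __ := (isInternal_genWeightSpace K L M).diagonal.toLinearMap ∘ₗ
    LinearMap.pi fun χ : Weight K L M ↦ χ.toLinear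
  map_lie' {x y} := by
    let D := (isInternal_genWeightSpace K L M).diagonal
    change D (fun χ ↦ χ ⁅x, y⁆) = ⁅D fun χ ↦ χ x, D fun χ ↦ χ y⁆
    simp only [Weight.apply_lie, Ring.lie_def, ← map_mul, mul_comm, sub_self]
    exact map_zero D

variable {K L M}

lemma isSemisimple_semisimplePart (x : L) : (semisimplePart K L M x).IsSemisimple :=
  (isInternal_genWeightSpace K L M).isSemisimple_diagonal _

lemma semisimplePart_lie (x y : L) : semisimplePart K L M ⁅x, y⁆ = 0 := by
  change (isInternal_genWeightSpace K L M).diagonal (fun χ ↦ χ ⁅x, y⁆) = 0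
  simp only [Weight.apply_lie]
  exact map_zero _

lemma commute_semisimplePart_toEnd (x y : L) :
    Commute (semisimplePart K L M x) (toEnd K L M y) :=
  (isInternal_genWeightSpace K L M).commute_diagonal _
    fun χ _ hm ↦ (genWeightSpace M χ).lie_mem hm

variable (K L M) in
noncomputable def nilpotentPart : L →ₗ⁅K⁆ Module.End K M :=
  (toEnd K L M).subOfCommute (semisimplePart K L M) semisimplePart_lie
    commute_semisimplePart_toEnd

lemma toEnd_eq_semisimplePart_add_nilpotentPart (x : L) :
    toEnd K L M x = semisimplePart K L M x + nilpotentPart K L M x :=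
  (add_sub_cancel _ _).symm

lemma isNilpotent_nilpotentPart (x : L) : _root_.IsNilpotent (nilpotentPart K L M x) :=
  (isInternal_genWeightSpace K L M).isNilpotent_sub_diagonal _
    (fun χ _ hm ↦ (genWeightSpace M χ).lie_mem hm) fun χ ↦ isNilpotent_toEnd_sub_algebraMap M χ x

lemma commute_semisimplePart_nilpotentPart (x y : L) :
    Commute (semisimplePart K L M x) (nilpotentPart K L M y) :=
  (commute_semisimplePart_toEnd x y).sub_right <|
    (Commute.all (fun χ : Weight K L M ↦ χ x) fun χ ↦ χ y).map
      (isInternal_genWeightSpace K L M).diagonal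

end LieModule

open LieModule in
theorem rep_decomposition_diagonal_nilpotent_general
    (n V : Type*) [LieRing n] [LieAlgebra ℂ n]
    [LieRing.IsNilpotent n]
    [AddCommGroup V] [Module ℂ V] [FiniteDimensional ℂ V]
    (ρ : n →ₗ⁅ℂ⁆ Module.End ℂ V) :
    ∃ δ ν : n →ₗ⁅ℂ⁆ Module.End ℂ V,
      (∀ x, ρ x = δ x + ν x) ∧
      (∀ x : n, (δ x).IsSemisimple) ∧
      (∀ x : n, IsNilpotent (ν x)) ∧
      (∀ x y : n, δ ⁅x, y⁆ = 0) ∧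
      (∀ x y : n, Commute (δ x) (ν y)) := by
  let : LieRingModule n V := LieRingModule.compLieHom V ρ
  have : LieModule ℂ n V := LieModule.compLieHom V ρ
  exact ⟨semisimplePart ℂ n V, nilpotentPart ℂ n V, toEnd_eq_semisimplePart_add_nilpotentPart,
    isSemisimple_semisimplePart, isNilpotent_nilpotentPart, semisimplePart_lie,
    commute_semisimplePart_nilpotentPart⟩

theorem rep_decomposition_diagonal_nilpotent
    (n V : Type*) [LieRing n] [LieAlgebra ℂ n] [FiniteDimensional ℂ n]
    [LieRing.IsNilpotent n]
    [AddCommGroup V] [Module ℂ V] [FiniteDimensional ℂ V]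
    (ρ : n →ₗ⁅ℂ⁆ Module.End ℂ V) :
    ∃ δ ν : n →ₗ⁅ℂ⁆ Module.End ℂ V,
      (∀ x, ρ x = δ x + ν x) ∧
      (∀ x : n, (δ x).IsSemisimple) ∧
      (∀ x : n, IsNilpotent (ν x)) ∧
      (∀ x y : n, δ ⁅x, y⁆ = 0) ∧
      (∀ x y : n, Commute (δ x) (ν y)) :=
  rep_decomposition_diagonal_nilpotent_general n V ρ
end

section
/- Let 𝔤 = 𝔟 ⋉_δ 𝔞 be a semidirect product of a finite-dimensional complex Lie algebra 𝔟 with an abelian Lie algebra 𝔞, where the action homomorphism δ: 𝔟 → gl(𝔞) is injective. Then μ(𝔤) ≤ dim(𝔞) + 1. -/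
attribute [local instance 100] LieRing.ofAssociativeRing

/-- The minimal dimension of a faithful finite-dimensional module of a Lie algebra. -/
noncomputable def lieMu (R g : Type*) [CommRing R] [LieRing g] [LieAlgebra R g] : ℕ :=
  sInf {d : ℕ | ∃ ρ : g →ₗ⁅R⁆ Module.End R (Fin d → R), Function.Injective ρ}

section Semidirect

variable {b a : Type*} [LieRing b] [LieAlgebra ℂ b] [AddCommGroup a] [Module ℂ a]

/-- The semidirect product `𝔟 ⋉_δ 𝔞` of a Lie algebra `𝔟` with an abelian Lie algebra `𝔞`,
defined by a representation `δ : 𝔟 → gl(𝔞)`. -/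
def LieSemidirect (δ : b →ₗ⁅ℂ⁆ Module.End ℂ a) : Type _ := b × a

namespace LieSemidirect

variable (δ : b →ₗ⁅ℂ⁆ Module.End ℂ a)

instance : AddCommGroup (LieSemidirect δ) := Prod.instAddCommGroup
instance : Module ℂ (LieSemidirect δ) := Prod.instModule

instance : LieRing (LieSemidirect δ) where
  bracket p q := ((⁅p.1, q.1⁆ : b), δ p.1 q.2 - δ q.1 p.2)
  add_lie x y z := by
    refine Prod.ext (add_lie x.1 y.1 z.1) ?_
    show δ (x.1 + y.1) z.2 - δ z.1 (x.2 + y.2)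
        = (δ x.1 z.2 - δ z.1 x.2) + (δ y.1 z.2 - δ z.1 y.2)
    simp only [map_add, LinearMap.add_apply]
    abel
  lie_add x y z := by
    refine Prod.ext (lie_add x.1 y.1 z.1) ?_
    show δ x.1 (y.2 + z.2) - δ (y.1 + z.1) x.2
        = (δ x.1 y.2 - δ y.1 x.2) + (δ x.1 z.2 - δ z.1 x.2)
    simp only [map_add, LinearMap.add_apply]
    abel
  lie_self x := by
    refine Prod.ext (lie_self x.1) ?_
    show δ x.1 x.2 - δ x.1 x.2 = 0
    simp
  leibniz_lie x y z := by
    refine Prod.ext (leibniz_lie x.1 y.1 z.1) ?_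
    show δ x.1 (δ y.1 z.2 - δ z.1 y.2) - δ ⁅y.1, z.1⁆ x.2
        = (δ ⁅x.1, y.1⁆ z.2 - δ z.1 (δ x.1 y.2 - δ y.1 x.2))
          + (δ y.1 (δ x.1 z.2 - δ z.1 x.2) - δ ⁅x.1, z.1⁆ y.2)
    simp only [map_sub, LieHom.map_lie, Ring.lie_def, LinearMap.sub_apply,
      Module.End.mul_apply]
    abel

instance : LieAlgebra ℂ (LieSemidirect δ) where
  lie_smul t x y := by
    refine Prod.ext (lie_smul t x.1 y.1) ?_
    show δ x.1 (t • y.2) - δ (t • y.1) x.2 = t • (δ x.1 y.2 - δ y.1 x.2)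
    simp only [map_smul, LinearMap.smul_apply, smul_sub]

end LieSemidirect

end Semidirect

theorem lieMu_le_finrank_of_injective {R g M : Type*} [CommRing R] [StrongRankCondition R]
    [LieRing g] [LieAlgebra R g] [AddCommGroup M] [Module R M] [Module.Free R M]
    [Module.Finite R M] (ρ : g →ₗ⁅R⁆ Module.End R M) (hρ : Function.Injective ρ) :
    lieMu R g ≤ Module.finrank R M :=
  let e := (Module.finBasis R M).equivFun
  Nat.sInf_le ⟨e.lieConj.toLieHom.comp ρ, e.lieConj.injective.comp hρ⟩

namespace LieSemidirect

variable {b a : Type*} [LieRing b] [LieAlgebra ℂ b] [AddCommGroup a] [Module ℂ a]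
  (δ : b →ₗ⁅ℂ⁆ Module.End ℂ a)

@[simp]
theorem add_fst (p q : LieSemidirect δ) : (p + q).1 = p.1 + q.1 := rfl

@[simp]
theorem add_snd (p q : LieSemidirect δ) : (p + q).2 = p.2 + q.2 := rfl

@[simp]
theorem smul_fst (c : ℂ) (p : LieSemidirect δ) : (c • p).1 = c • p.1 := rfl

@[simp]
theorem smul_snd (c : ℂ) (p : LieSemidirect δ) : (c • p).2 = c • p.2 := rfl

@[simp]
theorem lie_fst (p q : LieSemidirect δ) : ⁅p, q⁆.1 = ⁅p.1, q.1⁆ := rfl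

@[simp]
theorem lie_snd (p q : LieSemidirect δ) : ⁅p, q⁆.2 = δ p.1 q.2 - δ q.1 p.2 := rfl

/-- The embedding `𝔟 ⋉_δ 𝔞 → aff(𝔞) ⊆ gl(𝔞 × ℂ)`, with `𝔞` acting by translations. -/
def affineRep : LieSemidirect δ →ₗ⁅ℂ⁆ Module.End ℂ (a × ℂ) where
  toFun p := LinearMap.inl ℂ a ℂ ∘ₗ (δ p.1).coprod (LinearMap.toSpanSingleton ℂ a p.2)
  map_add' p q := by ext w <;> simp
  map_smul' c p := by ext w <;> simp
  map_lie' {p q} := by ext w <;> simp [Ring.lie_def]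

@[simp]
theorem affineRep_apply (p : LieSemidirect δ) (w : a × ℂ) :
    affineRep δ p w = (δ p.1 w.1 + w.2 • p.2, 0) := by
  simp [affineRep]

/-- The constant direction `(0, 1)` recovers the translation part `v`; the directions `(w, 0)`
recover `δ x`. -/
theorem affineRep_injective (hδ : Function.Injective δ) : Function.Injective (affineRep δ) := by
  intro p q h
  have hfst (w : a × ℂ) : (affineRep δ p w).1 = (affineRep δ q w).1 := by rw [h]
  exact Prod.ext (hδ <| LinearMap.ext fun v => by simpa using hfst (v, 0))
    (by simpa using hfst (0, 1))

end LieSemidirect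

theorem mu_semidirect_abelian_le_general
    (b a : Type*) [LieRing b] [LieAlgebra ℂ b]
    [AddCommGroup a] [Module ℂ a] [FiniteDimensional ℂ a]
    (δ : b →ₗ⁅ℂ⁆ Module.End ℂ a) (hδ : Function.Injective δ) :
    lieMu ℂ (LieSemidirect δ) ≤ Module.finrank ℂ a + 1 := by
  have hdim : Module.finrank ℂ (a × ℂ) = Module.finrank ℂ a + 1 := by
    rw [Module.finrank_prod, Module.finrank_self]
  exact hdim ▸ lieMu_le_finrank_of_injective _ (LieSemidirect.affineRep_injective δ hδ)

/-- If `𝔤 = 𝔟 ⋉_δ 𝔞` with `𝔞` abelian and `δ` injective, then `μ(𝔤) ≤ dim 𝔞 + 1`. -/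
theorem mu_semidirect_abelian_le
    (b a : Type*) [LieRing b] [LieAlgebra ℂ b] [FiniteDimensional ℂ b]
    [AddCommGroup a] [Module ℂ a] [FiniteDimensional ℂ a]
    (δ : b →ₗ⁅ℂ⁆ Module.End ℂ a) (hδ : Function.Injective δ) :
    lieMu ℂ (LieSemidirect δ) ≤ Module.finrank ℂ a + 1 :=
  mu_semidirect_abelian_le_general b a δ hδ
end

section
/- For n ≥ 3 the function f(n, β) = β + Σ_{j=0}^{n−2} p_{n−1−β}(j) is monotonically non-increasing in β for 1 ≤ β ≤ n−1; that is, f(n, n−1) ≤ f(n, n−2) ≤ ⋯ ≤ f(n, 2) = f(n, 1). -/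
/-!
Raising `β` by one adds `1` to `f(n, β)` and lowers the bound on the parts from `k + 1` to `k`,
where `k + 1 = n - 1 - β`. The partitions lost are those of `j ≤ n - 2` having a part `> k`;
for `j = k + 1` there is exactly one, the partition with the single part `k + 1`, so the sum drops
by at least `1`. For `β = 1` we have `k + 1 = n - 2`, every smaller `j` loses nothing, and the
drop is exactly `1`.
-/

/-- `restrictedPartitions k j` is the number `p_k(j)` of partitions of `j` in which each
part is at most `k`. -/
def restrictedPartitions (k j : ℕ) : ℕ :=
  Fintype.card {p : j.Partition // ∀ i ∈ p.parts, i ≤ k}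

/-- `partitionBound n β = f(n, β) = β + Σ_{j=0}^{n-2} p_{n-1-β}(j)`. -/
def partitionBound (n β : ℕ) : ℕ :=
  β + ∑ j ∈ Finset.range (n - 1), restrictedPartitions (n - 1 - β) j

open Finset

theorem Nat.Partition.eq_indiscrete_of_mem_parts {n : ℕ} {p : n.Partition} (h : n ∈ p.parts) :
    p = indiscrete n := by
  obtain ⟨s, hs⟩ := Multiset.exists_cons_of_mem h
  have hs_sum : s.sum = 0 := by
    have := p.parts_sum
    rw [hs, Multiset.sum_cons] at this
    omega
  have hs_zero : s = 0 := Multiset.eq_zero_of_forall_notMem fun a ha =>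
    (p.parts_pos (hs ▸ Multiset.mem_cons_of_mem ha)).ne' (Multiset.sum_eq_zero_iff.1 hs_sum a ha)
  ext1
  rw [hs, hs_zero, indiscrete_parts (p.parts_pos h).ne']
  rfl

theorem restrictedPartitions_mono {k k' : ℕ} (h : k ≤ k') (j : ℕ) :
    restrictedPartitions k j ≤ restrictedPartitions k' j :=
  Fintype.card_subtype_mono _ _ fun _ hp i hi => (hp i hi).trans h

theorem restrictedPartitions_of_le {k j : ℕ} (h : j ≤ k) :
    restrictedPartitions k j = Fintype.card j.Partition :=
  Fintype.card_congr <| Equiv.subtypeUnivEquiv fun _ _ hi =>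
    (Nat.Partition.le_of_mem_parts hi).trans h

theorem restrictedPartitions_succ_self (k : ℕ) :
    restrictedPartitions (k + 1) (k + 1) = restrictedPartitions k (k + 1) + 1 := by
  have hsplit (p : (k + 1).Partition) : (∀ i ∈ p.parts, i ≤ k + 1) ↔
      (∀ i ∈ p.parts, i ≤ k) ∨ p = Nat.Partition.indiscrete (k + 1) := by
    refine ⟨fun hp => ?_, fun _ _ hi => Nat.Partition.le_of_mem_parts hi⟩
    by_cases hk : ∀ i ∈ p.parts, i ≤ k
    · exact .inl hk
    · obtain ⟨i, hi, hki⟩ := not_forall₂.1 hk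
      obtain rfl : i = k + 1 := le_antisymm (hp i hi) (not_le.1 hki)
      exact .inr (Nat.Partition.eq_indiscrete_of_mem_parts hi)
  have hdisj : Disjoint (fun p : (k + 1).Partition => ∀ i ∈ p.parts, i ≤ k)
      (· = Nat.Partition.indiscrete (k + 1)) := by
    rw [Pi.disjoint_iff]
    intro p
    simp only [Prop.disjoint_iff, not_and]
    rintro hp rfl
    simpa using hp (k + 1) (by simp)
  rw [restrictedPartitions, Fintype.card_congr (Equiv.subtypeEquivRight hsplit),
    Fintype.card_subtype_or_disjoint _ _ hdisj, Fintype.card_subtype_eq]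
  rfl

theorem sum_range_restrictedPartitions_add_one_le {k m : ℕ} (h : k + 1 < m) :
    ∑ j ∈ range m, restrictedPartitions k j + 1 ≤
      ∑ j ∈ range m, restrictedPartitions (k + 1) j :=
  sum_lt_sum (fun j _ => restrictedPartitions_mono k.le_succ j)
    ⟨k + 1, mem_range.2 h, by rw [restrictedPartitions_succ_self]; omega⟩

theorem sum_range_restrictedPartitions_succ_self (k : ℕ) :
    ∑ j ∈ range (k + 2), restrictedPartitions (k + 1) j =
      ∑ j ∈ range (k + 2), restrictedPartitions k j + 1 := by
  have hlow : ∑ j ∈ range (k + 1), restrictedPartitions (k + 1) j =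
      ∑ j ∈ range (k + 1), restrictedPartitions k j :=
    sum_congr rfl fun j hj => by
      have hjk : j ≤ k := Nat.lt_succ_iff.1 (mem_range.1 hj)
      rw [restrictedPartitions_of_le hjk, restrictedPartitions_of_le (hjk.trans k.le_succ)]
  rw [sum_range_succ, sum_range_succ _ (k + 1), hlow, restrictedPartitions_succ_self, add_assoc]

theorem partitionBound_monotone (n : ℕ) (hn : 3 ≤ n) :
    (∀ β : ℕ, 1 ≤ β → β + 1 ≤ n - 1 → partitionBound n (β + 1) ≤ partitionBound n β) ∧
    partitionBound n 2 = partitionBound n 1 := by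
  constructor
  · intro β hβ hβn
    obtain ⟨k, hk⟩ : ∃ k, n - 1 - β = k + 1 := ⟨n - 1 - β - 1, by omega⟩
    have hk' : n - 1 - (β + 1) = k := by omega
    have hdrop := sum_range_restrictedPartitions_add_one_le (m := n - 1) (k := k) (by omega)
    simp only [partitionBound, hk, hk']
    omega
  · obtain ⟨k, rfl⟩ : ∃ k, n = k + 3 := ⟨n - 3, by omega⟩
    have hdrop := sum_range_restrictedPartitions_succ_self k
    simp only [partitionBound, show k + 3 - 1 = k + 2 by omega, show k + 2 - 2 = k by omega,
      show k + 2 - 1 = k + 1 by omega]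
    omega
end
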